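/- Let 𝒜 be a nonempty finite alphabet and let ω be a Toeplitz sequence over 𝒜. Then for every integer p ≥ 1 there exists an integer K ≥ 1 with the following property: for every x ∈ Z(ω,σ) and every n ≥ 1, if x(n+kp) = x(n) for all 1 ≤ k ≤ K, then x(n+kp) = x(n) for all k ≥ 1. -/

import Mathlib

/-- The one-sided shift on sequences.  Sequences are 0-indexed here: index `n`
stands for position `n+1` of the paper's sequences `{1,2,3,…} → 𝒜`. -/
def shift {𝒜 : Type*} (x : ℕ → 𝒜) : ℕ → 𝒜 := fun n => x (n + 1)

/-- `Z(ω,σ)`: the closure of the forward shift-orbit of `ω`. -/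
def orbitClosure {𝒜 : Type*} [TopologicalSpace 𝒜] (ω : ℕ → 𝒜) : Set (ℕ → 𝒜) :=
  closure {y | ∃ n : ℕ, shift^[n] ω = y}

/-- A sequence is Toeplitz if every position is periodically repeated. -/
def IsToeplitz {𝒜 : Type*} (x : ℕ → 𝒜) : Prop :=
  ∀ n : ℕ, ∃ p : ℕ, 0 < p ∧ ∀ k : ℕ, 0 < k → x (n + k * p) = x n

/-! Along each residue class `r + kp` the sequence `ω` is again Toeplitz. A non-constant
Toeplitz sequence has positions `i, j` with `ω i ≠ ω j`, each value recurring with a fixed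
period, so it has no constant run longer than `i + j` plus the two periods. The largest of these bounds over the `p` residue
classes is the required `K` for `ω` itself, and a point of the orbit closure agrees with a
shift of `ω` on every finite window, which carries the property over to it. -/

lemma shift_iterate_apply {𝒜 : Type*} (m : ℕ) (x : ℕ → 𝒜) (j : ℕ) :
    shift^[m] x j = x (j + m) := by
  induction m generalizing x with
  | zero => rfl
  | succ m ih => rw [Function.iterate_succ_apply, ih]; rfl

lemma exists_add_mul_mem_Icc (a i : ℕ) {q : ℕ} (hq : 0 < q) :
    ∃ k, 0 < k ∧ a ≤ i + k * q ∧ i + k * q ≤ a + (i + q) := by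
  refine ⟨a / q + 1, Nat.succ_pos _, ?_, ?_⟩
  · have := Nat.lt_div_mul_add (a := a) hq
    rw [add_mul, one_mul]
    omega
  · have := Nat.div_mul_le_self a q
    rw [add_mul, one_mul]
    omega

namespace IsToeplitz

variable {𝒜 : Type*} {ω : ℕ → 𝒜}

lemma comp_add_mul (hω : IsToeplitz ω) (r : ℕ) {p : ℕ} (hp : 0 < p) :
    IsToeplitz fun k => ω (r + k * p) := by
  intro n
  obtain ⟨q, hq, hper⟩ := hω (r + n * p)
  refine ⟨q, hq, fun k hk => ?_⟩
  calc ω (r + (n + k * q) * p) = ω (r + n * p + k * p * q) := by ring_nf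
    _ = ω (r + n * p) := hper (k * p) (Nat.mul_pos hk hp)

lemma exists_run_bound (hω : IsToeplitz ω) :
    ∃ B, ∀ a, (∀ k ≤ B, ω (a + k) = ω a) → ∀ k, ω (a + k) = ω a := by
  by_cases hconst : ∀ i j, ω i = ω j
  · exact ⟨0, fun a _ k => hconst _ _⟩
  push Not at hconst
  obtain ⟨i, j, hij⟩ := hconst
  obtain ⟨qi, hqi, hi⟩ := hω i
  obtain ⟨qj, hqj, hj⟩ := hω j
  refine ⟨(i + qi) + (j + qj), fun a hrun => absurd ?_ hij⟩
  -- the run starting at `a` contains a repetition of `ω i` and one of `ω j`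
  obtain ⟨k, hk, hak, hka⟩ := exists_add_mul_mem_Icc a i hqi
  obtain ⟨l, hl, hal, hla⟩ := exists_add_mul_mem_Icc a j hqj
  have hωi : ω i = ω a := by
    rw [← hi k hk, ← Nat.add_sub_cancel' hak]
    exact hrun _ (by omega)
  have hωj : ω j = ω a := by
    rw [← hj l hl, ← Nat.add_sub_cancel' hal]
    exact hrun _ (by omega)
  rw [hωi, hωj]

lemma exists_progression_bound (hω : IsToeplitz ω) {p : ℕ} (hp : 0 < p) :
    ∃ K, ∀ N, (∀ k ≤ K, ω (N + k * p) = ω N) → ∀ k, ω (N + k * p) = ω N := by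
  choose B hB using fun r => (hω.comp_add_mul r hp).exists_run_bound
  refine ⟨(Finset.range p).sup B, fun N hrun k => ?_⟩
  have hBK : B (N % p) ≤ (Finset.range p).sup B :=
    Finset.le_sup (Finset.mem_range.mpr (Nat.mod_lt N hp))
  have hcol : ∀ k, ω (N % p + (N / p + k) * p) = ω (N + k * p) := fun k => by
    rw [add_mul, ← add_assoc, Nat.mod_add_div']
  have hcol₀ : ω (N % p + N / p * p) = ω N := by rw [Nat.mod_add_div']
  have := hB (N % p) (N / p) (fun k hk => by
    simp only [hcol, hcol₀]; exact hrun k (hk.trans hBK)) k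
  simpa only [hcol, hcol₀] using this

end IsToeplitz

lemma exists_shift_eq_of_mem_orbitClosure {𝒜 : Type*} [TopologicalSpace 𝒜]
    [DiscreteTopology 𝒜] {ω x : ℕ → 𝒜} (hx : x ∈ orbitClosure ω) (M : ℕ) :
    ∃ m, ∀ j ≤ M, x j = ω (j + m) := by
  have hwindow : IsOpen ((Set.Iic M).pi fun j => {x j}) :=
    isOpen_set_pi (Set.finite_Iic M) fun _ _ => isOpen_discrete _
  obtain ⟨_, hy, m, rfl⟩ :=
    mem_closure_iff.mp hx _ hwindow fun _ _ => Set.mem_singleton _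
  exact ⟨m, fun j hj => ((shift_iterate_apply m ω j).symm.trans (hy j hj)).symm⟩

theorem stmt11_general {𝒜 : Type*} [TopologicalSpace 𝒜] [DiscreteTopology 𝒜]
    (ω : ℕ → 𝒜) (hT : IsToeplitz ω) (p : ℕ) (hp : 0 < p) :
    ∃ K : ℕ, 0 < K ∧ ∀ x ∈ orbitClosure ω, ∀ n : ℕ,
      (∀ k : ℕ, 1 ≤ k → k ≤ K → x (n + k * p) = x n) →
      ∀ k : ℕ, 0 < k → x (n + k * p) = x n := by
  obtain ⟨K, hK⟩ := hT.exists_progression_bound hp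
  refine ⟨K + 1, K.succ_pos, fun x hx n hrun k₀ _ => ?_⟩
  obtain ⟨m, hm⟩ := exists_shift_eq_of_mem_orbitClosure hx (n + (k₀ + K) * p)
  have hxω : ∀ k ≤ k₀ + K, x (n + k * p) = ω (n + m + k * p) := fun k hk => by
    rw [hm _ (by gcongr), add_right_comm]
  have hx₀ : x n = ω (n + m) := by simpa using hxω 0 (Nat.zero_le _)
  have hωrun : ∀ k ≤ K, ω (n + m + k * p) = ω (n + m) := fun k hk => by
    rcases k.eq_zero_or_pos with rfl | hk₀
    · simp
    · rw [← hxω k (by omega), ← hx₀]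
      exact hrun k hk₀ (by omega)
  rw [hxω k₀ (by omega), hx₀]
  exact hK _ hωrun k₀

/-- For a Toeplitz sequence `ω` and any `p ≥ 1` there is a `K ≥ 1` such that for
every `x ∈ Z(ω,σ)` and every position `n`: if `x(n+kp) = x(n)` for `1 ≤ k ≤ K`,
then `x(n+kp) = x(n)` for all `k ≥ 1`. -/
theorem stmt11 {𝒜 : Type*} [Fintype 𝒜] [Nonempty 𝒜] [TopologicalSpace 𝒜] [DiscreteTopology 𝒜]
    (ω : ℕ → 𝒜) (hT : IsToeplitz ω) (p : ℕ) (hp : 0 < p) :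
    ∃ K : ℕ, 0 < K ∧ ∀ x ∈ orbitClosure ω, ∀ n : ℕ,
      (∀ k : ℕ, 1 ≤ k → k ≤ K → x (n + k * p) = x n) →
      ∀ k : ℕ, 0 < k → x (n + k * p) = x n :=
  stmt11_general ω hT p hp
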